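/- Let F₁ : U → ℂ^N be holomorphic and nowhere zero on an open set U ⊆ ℂ, and define inductively F_{s+1} = ∂F_s − (⟨∂F_s, conj F_s⟩/‖F_s‖²) F_s wherever F_s ≠ 0. Then ∂(conj F₂) is a scalar multiple of conj F₁ at every point; explicitly ∂(conj F₂) = −∂(⟨∂̄(conj F₁), F₁⟩/‖F₁‖²) · conj F₁. -/

import Mathlib

/-- The symmetric (complex bilinear) product `⟨v,w⟩ = Σ v_j w_j` (no conjugation). -/
noncomputable def symProd {N : ℕ} (v w : Fin N → ℂ) : ℂ := ∑ j, v j * w j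

/-- Componentwise complex conjugation. -/
def conjV {N : ℕ} (v : Fin N → ℂ) : Fin N → ℂ := fun j => (starRingEnd ℂ) (v j)

/-- The Wirtinger derivative `∂ = ∂/∂z`. -/
noncomputable def wd {E : Type*} [NormedAddCommGroup E] [NormedSpace ℂ E]
    (f : ℂ → E) (z : ℂ) : E :=
  (1 / 2 : ℂ) • (fderiv ℝ f z 1 - Complex.I • fderiv ℝ f z Complex.I)

/-- The anti-Wirtinger derivative `∂̄ = ∂/∂z̄`. -/
noncomputable def wdb {E : Type*} [NormedAddCommGroup E] [NormedSpace ℂ E]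
    (f : ℂ → E) (z : ℂ) : E :=
  (1 / 2 : ℂ) • (fderiv ℝ f z 1 + Complex.I • fderiv ℝ f z Complex.I)

open Complex Filter Topology

section aux

variable {E : Type*} [NormedAddCommGroup E] [NormedSpace ℂ E] {f g : ℂ → E} {z : ℂ}

lemma wd_congr (h : f =ᶠ[nhds z] g) : wd f z = wd g z := by
  unfold wd; rw [h.fderiv_eq]

lemma wd_sub (hf : DifferentiableAt ℝ f z) (hg : DifferentiableAt ℝ g z) :
    wd (fun w => f w - g w) z = wd f z - wd g z := by
  unfold wd
  rw [fderiv_fun_sub hf hg]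
  simp only [ContinuousLinearMap.sub_apply, smul_sub]
  module

lemma wd_smul {c : ℂ → ℂ} (hc : DifferentiableAt ℝ c z) (hf : DifferentiableAt ℝ f z) :
    wd (fun w => c w • f w) z = wd c z • f z + c z • wd f z := by
  unfold wd
  rw [fderiv_fun_smul hc hf]
  simp only [ContinuousLinearMap.add_apply, ContinuousLinearMap.coe_smul',
    Pi.smul_apply, ContinuousLinearMap.smulRight_apply, smul_eq_mul]
  module

lemma wd_eq_of_hasDerivAt {c : E} (h : HasDerivAt f c z) : wd f z = c := by
  have hD : fderiv ℝ f z
      = ((ContinuousLinearMap.smulRight (1 : ℂ →L[ℂ] ℂ) c).restrictScalars ℝ) :=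
    (h.hasFDerivAt.restrictScalars ℝ).fderiv
  unfold wd
  rw [hD]
  simp only [ContinuousLinearMap.coe_restrictScalars', ContinuousLinearMap.smulRight_apply,
    ContinuousLinearMap.one_apply, one_smul, smul_smul, Complex.I_mul_I, neg_one_smul,
    sub_neg_eq_add]
  module

lemma wdb_eq_zero_of_hasDerivAt {c : E} (h : HasDerivAt f c z) : wdb f z = 0 := by
  have hD : fderiv ℝ f z
      = ((ContinuousLinearMap.smulRight (1 : ℂ →L[ℂ] ℂ) c).restrictScalars ℝ) :=
    (h.hasFDerivAt.restrictScalars ℝ).fderiv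
  unfold wdb
  rw [hD]
  simp [smul_smul, Complex.I_mul_I]

lemma hasDerivAt_of_wdb_eq_zero (hf : DifferentiableAt ℝ f z) (h : wdb f z = 0) :
    HasDerivAt f (fderiv ℝ f z 1) z := by
  set D := fderiv ℝ f z with hDdef
  have h2 : D 1 + Complex.I • D Complex.I = 0 := by
    have := congrArg (fun x => (2 : ℂ) • x) h
    unfold wdb at this
    simpa [smul_smul, ← hDdef] using this
  have hI : D Complex.I = Complex.I • D 1 := by
    have h3 : Complex.I • (D 1 + Complex.I • D Complex.I) = Complex.I • (0 : E) := by rw [h2]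
    rw [smul_add, smul_smul, Complex.I_mul_I, neg_one_smul, smul_zero] at h3
    exact (add_neg_eq_zero.mp h3).symm
  have hext : (ContinuousLinearMap.smulRight (1 : ℂ →L[ℂ] ℂ) (D 1)).restrictScalars ℝ = D := by
    apply ContinuousLinearMap.ext
    intro w
    have hw : (w : ℂ) = (w.re : ℝ) • (1 : ℂ) + (w.im : ℝ) • Complex.I := by
      simp [Complex.real_smul]
    have hDw : D w = (w.re : ℝ) • D 1 + (w.im : ℝ) • D Complex.I := by
      conv_lhs => rw [hw]
      rw [map_add, map_smul, map_smul]
    simp only [ContinuousLinearMap.coe_restrictScalars', ContinuousLinearMap.smulRight_apply,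
      ContinuousLinearMap.one_apply]
    rw [hDw, hI]
    match_scalars
    simp [Complex.real_smul]
  have hF : HasFDerivAt f (ContinuousLinearMap.smulRight (1 : ℂ →L[ℂ] ℂ) (D 1)) z :=
    hasFDerivAt_of_restrictScalars ℝ hf.hasFDerivAt hext
  simpa using hF.hasDerivAt

lemma wd_apply {N : ℕ} {f : ℂ → Fin N → ℂ} (hf : DifferentiableAt ℝ f z) (j : Fin N) :
    wd f z j = wd (fun w => f w j) z := by
  have h : fderiv ℝ (fun w => f w j) z
      = (ContinuousLinearMap.proj j : (Fin N → ℂ) →L[ℝ] ℂ).comp (fderiv ℝ f z) :=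
    ((ContinuousLinearMap.proj j : (Fin N → ℂ) →L[ℝ] ℂ).hasFDerivAt.comp z hf.hasFDerivAt).fderiv
  unfold wd
  rw [h]
  simp

lemma wdb_apply {N : ℕ} {f : ℂ → Fin N → ℂ} (hf : DifferentiableAt ℝ f z) (j : Fin N) :
    wdb f z j = wdb (fun w => f w j) z := by
  have h : fderiv ℝ (fun w => f w j) z
      = (ContinuousLinearMap.proj j : (Fin N → ℂ) →L[ℝ] ℂ).comp (fderiv ℝ f z) :=
    ((ContinuousLinearMap.proj j : (Fin N → ℂ) →L[ℝ] ℂ).hasFDerivAt.comp z hf.hasFDerivAt).fderiv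
  unfold wdb
  rw [h]
  simp

lemma wd_conj {f : ℂ → ℂ} (hf : DifferentiableAt ℝ f z) :
    wd (fun w => (starRingEnd ℂ) (f w)) z = (starRingEnd ℂ) (wdb f z) := by
  have h : fderiv ℝ (fun w => (starRingEnd ℂ) (f w)) z
      = (Complex.conjCLE.toContinuousLinearMap).comp (fderiv ℝ f z) :=
    (Complex.conjCLE.toContinuousLinearMap.hasFDerivAt.comp z hf.hasFDerivAt).fderiv
  unfold wd wdb
  rw [h]
  simp only [ContinuousLinearMap.coe_comp', Function.comp_apply,
    ContinuousLinearEquiv.coe_coe, Complex.conjCLE_apply, map_add, map_mul, map_sub,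
    Complex.conj_I, smul_eq_mul, map_div₀, map_ofNat, map_one]
  ring

lemma wdb_conj {f : ℂ → ℂ} (hf : DifferentiableAt ℝ f z) :
    wdb (fun w => (starRingEnd ℂ) (f w)) z = (starRingEnd ℂ) (wd f z) := by
  have h : fderiv ℝ (fun w => (starRingEnd ℂ) (f w)) z
      = (Complex.conjCLE.toContinuousLinearMap).comp (fderiv ℝ f z) :=
    (Complex.conjCLE.toContinuousLinearMap.hasFDerivAt.comp z hf.hasFDerivAt).fderiv
  unfold wd wdb
  rw [h]
  simp only [ContinuousLinearMap.coe_comp', Function.comp_apply,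
    ContinuousLinearEquiv.coe_coe, Complex.conjCLE_apply, map_add, map_mul, map_sub,
    Complex.conj_I, smul_eq_mul, map_div₀, map_ofNat, map_one]
  ring

/-- Componentwise conjugation as a continuous `ℝ`-linear map. -/
noncomputable def conjL (N : ℕ) : (Fin N → ℂ) →L[ℝ] (Fin N → ℂ) :=
  ContinuousLinearMap.pi fun j =>
    Complex.conjCLE.toContinuousLinearMap.comp (ContinuousLinearMap.proj j)

lemma conjL_apply {N : ℕ} (v : Fin N → ℂ) : conjL N v = conjV v := rfl

lemma diff_conjV {N : ℕ} {f : ℂ → Fin N → ℂ} (hf : DifferentiableAt ℝ f z) :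
    DifferentiableAt ℝ (fun w => conjV (f w)) z := by
  have := ((conjL N).differentiableAt).comp z hf
  simpa [Function.comp, conjL_apply] using this

lemma diff_proj {N : ℕ} {f : ℂ → Fin N → ℂ} (hf : DifferentiableAt ℝ f z) (j : Fin N) :
    DifferentiableAt ℝ (fun w => f w j) z :=
  (ContinuousLinearMap.proj j : (Fin N → ℂ) →L[ℝ] ℂ).differentiableAt.comp z hf

lemma diff_conj {f : ℂ → ℂ} (hf : DifferentiableAt ℝ f z) :
    DifferentiableAt ℝ (fun w => (starRingEnd ℂ) (f w)) z := by
  have := (Complex.conjCLE.toContinuousLinearMap.differentiableAt).comp z hf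
  exact this

lemma wd_conjV {N : ℕ} {f : ℂ → Fin N → ℂ} (hf : DifferentiableAt ℝ f z) :
    wd (fun w => conjV (f w)) z = conjV (wdb f z) := by
  funext j
  rw [wd_apply (diff_conjV hf) j]
  show wd (fun w => (starRingEnd ℂ) (f w j)) z = (starRingEnd ℂ) (wdb f z j)
  rw [wd_conj (diff_proj hf j), wdb_apply hf j]

lemma wdb_conjV {N : ℕ} {f : ℂ → Fin N → ℂ} (hf : DifferentiableAt ℝ f z) :
    wdb (fun w => conjV (f w)) z = conjV (wd f z) := by
  funext j
  rw [wdb_apply (diff_conjV hf) j]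
  show wdb (fun w => (starRingEnd ℂ) (f w j)) z = (starRingEnd ℂ) (wd f z j)
  rw [wdb_conj (diff_proj hf j), wd_apply hf j]

lemma conjV_zero {N : ℕ} : conjV (0 : Fin N → ℂ) = 0 := by
  funext j; simp [conjV]

end aux

/-- With `F₁` holomorphic and nowhere zero and
`F₂ = ∂F₁ − (⟨∂F₁, conj F₁⟩/‖F₁‖²) F₁`, one has
`∂(conj F₂) = −∂(⟨∂̄(conj F₁), F₁⟩/‖F₁‖²) · conj F₁` on `U`. -/
theorem deriv_conj_F2 (N : ℕ) (U : Set ℂ) (hU : IsOpen U)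
    (F₁ : ℂ → Fin N → ℂ) (hsm : ContDiffOn ℝ (⊤ : ℕ∞) F₁ U)
    (hhol : ∀ z ∈ U, wdb F₁ z = 0)
    (hnz : ∀ z ∈ U, F₁ z ≠ 0)
    (F₂ : ℂ → Fin N → ℂ)
    (hF₂ : ∀ z ∈ U, F₂ z =
      wd F₁ z - (symProd (wd F₁ z) (conjV (F₁ z)) / symProd (F₁ z) (conjV (F₁ z))) • F₁ z) :
    ∀ z ∈ U,
      wd (fun w => conjV (F₂ w)) z =
        (- wd (fun w =>
            symProd (wdb (fun u => conjV (F₁ u)) w) (F₁ w) /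
              symProd (F₁ w) (conjV (F₁ w))) z) • conjV (F₁ z) := by
  intro z hz
  have hUz : U ∈ nhds z := hU.mem_nhds hz
  have hdiffR : ∀ w ∈ U, DifferentiableAt ℝ F₁ w := fun w hw =>
    (hsm.contDiffAt (hU.mem_nhds hw)).differentiableAt (by simp)
  have hder : ∀ w ∈ U, HasDerivAt F₁ (fderiv ℝ F₁ w 1) w := fun w hw =>
    hasDerivAt_of_wdb_eq_zero (hdiffR w hw) (hhol w hw)
  have hdiffC : DifferentiableOn ℂ F₁ U := fun w hw =>
    ((hder w hw).differentiableAt).differentiableWithinAt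
  set G : ℂ → Fin N → ℂ := deriv F₁ with hG
  have hwdG : ∀ w ∈ U, wd F₁ w = G w := fun w hw => by
    rw [wd_eq_of_hasDerivAt (hder w hw), hG]
    exact ((hder w hw).deriv).symm
  have hGan : AnalyticOnNhd ℂ G U := (hdiffC.analyticOnNhd hU).deriv
  have hGdC : ∀ w ∈ U, DifferentiableAt ℂ G w := fun w hw => (hGan w hw).differentiableAt
  set d : ℂ → ℂ := fun w => symProd (F₁ w) (conjV (F₁ w)) with hd
  set n : ℂ → ℂ := fun w => symProd (G w) (conjV (F₁ w)) with hn
  set a : ℂ → ℂ := fun w => n w / d w with ha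
  have hdne : ∀ w ∈ U, d w ≠ 0 := by
    intro w hw h0
    apply hnz w hw
    have h1 : ((∑ j, Complex.normSq (F₁ w j) : ℝ) : ℂ) = 0 := by
      rw [← h0]
      simp [hd, symProd, conjV, Complex.mul_conj]
    have h2 : (∑ j, Complex.normSq (F₁ w j) : ℝ) = 0 := by exact_mod_cast h1
    have h3 := (Finset.sum_eq_zero_iff_of_nonneg
      (fun j _ => Complex.normSq_nonneg (F₁ w j))).mp h2
    funext j
    exact Complex.normSq_eq_zero.mp (h3 j (Finset.mem_univ j))
  -- differentiability at z
  have hF₁z : DifferentiableAt ℝ F₁ z := hdiffR z hz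
  have hGz : DifferentiableAt ℝ G z := ((hGdC z hz).restrictScalars ℝ)
  have hnD : DifferentiableAt ℝ n z := by
    simp only [hn, symProd, conjV]
    apply DifferentiableAt.fun_sum
    intro j _
    exact (diff_proj hGz j).mul (diff_conj (diff_proj hF₁z j))
  have hdD : DifferentiableAt ℝ d z := by
    simp only [hd, symProd, conjV]
    apply DifferentiableAt.fun_sum
    intro j _
    exact (diff_proj hF₁z j).mul (diff_conj (diff_proj hF₁z j))
  have haD : DifferentiableAt ℝ a z := by
    simpa only [ha, div_eq_mul_inv] using hnD.fun_mul (hdD.fun_inv (hdne z hz))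
  have hcaD : DifferentiableAt ℝ (fun w => (starRingEnd ℂ) (a w)) z := diff_conj haD
  have hcF₁D : DifferentiableAt ℝ (fun w => conjV (F₁ w)) z := diff_conjV hF₁z
  have hcGD : DifferentiableAt ℝ (fun w => conjV (G w)) z := diff_conjV hGz
  -- the scalar in the statement equals conj ∘ a on U
  have hbeq : ∀ w ∈ U,
      symProd (wdb (fun u => conjV (F₁ u)) w) (F₁ w) / symProd (F₁ w) (conjV (F₁ w))
        = (starRingEnd ℂ) (a w) := by
    intro w hw
    have h1 : wdb (fun u => conjV (F₁ u)) w = conjV (G w) := by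
      rw [wdb_conjV (hdiffR w hw), hwdG w hw]
    have h2 : symProd (conjV (G w)) (F₁ w) = (starRingEnd ℂ) (n w) := by
      simp [hn, symProd, conjV, map_sum, mul_comm]
    have h3 : (starRingEnd ℂ) (d w) = d w := by
      simp [hd, symProd, conjV, map_sum, mul_comm]
    rw [h1, h2]
    show (starRingEnd ℂ) (n w) / d w = _
    rw [← h3]
    simp only [ha, map_div₀]
  -- eventual description of conjV ∘ F₂
  have hE1 : (fun w => conjV (F₂ w)) =ᶠ[nhds z]
      (fun w => conjV (G w) - (starRingEnd ℂ) (a w) • conjV (F₁ w)) := by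
    filter_upwards [hUz] with w hw
    rw [hF₂ w hw, hwdG w hw]
    funext j
    simp [conjV, ha, hn, hd, map_sub, map_mul]
  have hE2 : (fun w =>
      symProd (wdb (fun u => conjV (F₁ u)) w) (F₁ w) / symProd (F₁ w) (conjV (F₁ w)))
      =ᶠ[nhds z] (fun w => (starRingEnd ℂ) (a w)) := by
    filter_upwards [hUz] with w hw
    exact hbeq w hw
  have hwdbG : wdb G z = 0 := wdb_eq_zero_of_hasDerivAt (hGdC z hz).hasDerivAt
  calc wd (fun w => conjV (F₂ w)) z
      = wd (fun w => conjV (G w) - (starRingEnd ℂ) (a w) • conjV (F₁ w)) z := wd_congr hE1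
    _ = wd (fun w => conjV (G w)) z
        - wd (fun w => (starRingEnd ℂ) (a w) • conjV (F₁ w)) z :=
        wd_sub hcGD (hcaD.smul hcF₁D)
    _ = conjV (wdb G z)
        - (wd (fun w => (starRingEnd ℂ) (a w)) z • conjV (F₁ z)
            + (starRingEnd ℂ) (a z) • wd (fun w => conjV (F₁ w)) z) := by
        rw [wd_conjV hGz, wd_smul hcaD hcF₁D]
    _ = - wd (fun w => (starRingEnd ℂ) (a w)) z • conjV (F₁ z) := by
        rw [hwdbG, conjV_zero, wd_conjV hF₁z, hhol z hz, conjV_zero, smul_zero, add_zero,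
          zero_sub, neg_smul]
    _ = (- wd (fun w =>
            symProd (wdb (fun u => conjV (F₁ u)) w) (F₁ w) /
              symProd (F₁ w) (conjV (F₁ w))) z) • conjV (F₁ z) := by
        rw [wd_congr hE2]
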